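/- arXiv:2308.12359 — 2 statements merged into one kernel-verified Lean document; each statement's English description precedes it below -/
import Mathlib

section
/- Let R > 0 and define α_{k+1} = α_k (1 - (1/((k+1)(k+3))) · α_k² R²/(1 - α_k² R²)) with α_0 ∈ (0, 3/(4R)). Then α_k ∈ (0, 3/(4R)) for all k, the sequence (α_k) is nonincreasing, and it converges to a positive limit α_∞ > 0. -/
/-!
Write the recurrence as `α (k + 1) = α k * (1 - t k)`. While `α k R < 3/4` we have
`α k² R² / (1 - α k² R²) < 9/7`, so `0 ≤ t k ≤ 9 / (7 (k + 1) (k + 3)) ≤ 3/7`: the sequence stays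
positive, decreases, and hence never leaves `(0, 3/(4R))`. Since `1 - t ≥ exp (-2t)` for
`t ∈ [0, 1/2]`, it is bounded below by `α 0 * exp (-2 ∑ t k) > 0`, and `∑ t k` converges by
comparison with `∑ 1 / (k + 1)²`.
-/

open Filter Finset Real

lemma exp_neg_two_mul_le_one_sub {t : ℝ} (ht0 : 0 ≤ t) (ht : t ≤ 1 / 2) :
    exp (-(2 * t)) ≤ 1 - t := by
  have hpos : 0 < 1 + 2 * t := by linarith
  calc exp (-(2 * t)) = (exp (2 * t))⁻¹ := exp_neg _
    _ ≤ (1 + 2 * t)⁻¹ := inv_anti₀ hpos (by linarith [add_one_le_exp (2 * t)])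
    _ ≤ 1 - t := by rw [inv_le_iff_one_le_mul₀ hpos]; nlinarith

section MulOneSub

variable {a t : ℕ → ℝ}

lemma mul_exp_neg_two_mul_sum_le (hrec : ∀ k, a (k + 1) = a k * (1 - t k)) (ha0 : 0 ≤ a 0)
    (ht0 : ∀ k, 0 ≤ t k) (ht : ∀ k, t k ≤ 1 / 2) (n : ℕ) :
    a 0 * exp (-(2 * ∑ k ∈ range n, t k)) ≤ a n := by
  induction n with
  | zero => simp
  | succ n ih =>
    calc a 0 * exp (-(2 * ∑ k ∈ range (n + 1), t k))
        = a 0 * exp (-(2 * ∑ k ∈ range n, t k)) * exp (-(2 * t n)) := by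
          rw [sum_range_succ, mul_assoc, ← exp_add]; ring_nf
      _ ≤ a n * (1 - t n) :=
          mul_le_mul ih (exp_neg_two_mul_le_one_sub (ht0 n) (ht n)) (exp_pos _).le
            ((mul_nonneg ha0 (exp_pos _).le).trans ih)
      _ = a (n + 1) := (hrec n).symm

theorem antitone_and_tendsto_pos_of_mul_one_sub (hrec : ∀ k, a (k + 1) = a k * (1 - t k))
    (ha0 : 0 < a 0) (ht0 : ∀ k, 0 ≤ t k) (ht : ∀ k, t k ≤ 1 / 2) (hsum : Summable t) :
    Antitone a ∧ ∃ L, 0 < L ∧ Tendsto a atTop (nhds L) := by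
  set c := a 0 * exp (-(2 * ∑' k, t k))
  have hc : 0 < c := by positivity
  have hlow : ∀ n, c ≤ a n := fun n =>
    calc c ≤ a 0 * exp (-(2 * ∑ k ∈ range n, t k)) :=
          mul_le_mul_of_nonneg_left (exp_le_exp.mpr
            (by linarith [hsum.sum_le_tsum (range n) fun k _ => ht0 k])) ha0.le
      _ ≤ a n := mul_exp_neg_two_mul_sum_le hrec ha0.le ht0 ht n
  have hanti : Antitone a := antitone_nat_of_succ_le fun n => by
    rw [hrec n]
    nlinarith [hlow n, ht0 n]
  exact ⟨hanti, ⨅ n, a n, hc.trans_le (le_ciInf hlow),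
    tendsto_atTop_ciInf hanti ⟨c, Set.forall_mem_range.mpr hlow⟩⟩

end MulOneSub

lemma one_div_add_one_mul_add_three_le (k : ℕ) :
    1 / (((k : ℝ) + 1) * ((k : ℝ) + 3)) ≤ 1 / 3 :=
  one_div_le_one_div_of_le (by norm_num) (by nlinarith [(k.cast_nonneg : (0 : ℝ) ≤ k)])

lemma summable_one_div_add_one_mul_add_three :
    Summable fun k : ℕ => 1 / (((k : ℝ) + 1) * ((k : ℝ) + 3)) := by
  have hsq : Summable fun k : ℕ => 1 / ((k : ℝ) + 1) ^ 2 := by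
    exact_mod_cast (summable_nat_add_iff 1).mpr (Real.summable_one_div_nat_pow.mpr one_lt_two)
  refine hsq.of_nonneg_of_le (fun k => by positivity) fun k => ?_
  exact one_div_le_one_div_of_le (by positivity) (by nlinarith)

lemma eagv_decrement_mem_Icc {R x c : ℝ} (hR : 0 < R) (hx0 : 0 < x) (hx : x < 3 / (4 * R))
    (hc : 0 ≤ c) :
    c * (x ^ 2 * R ^ 2 / (1 - x ^ 2 * R ^ 2)) ∈ Set.Icc 0 (9 / 7 * c) := by
  have hxR : x * R < 3 / 4 := by
    rw [lt_div_iff₀ (by positivity)] at hx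
    linarith
  have hs : x ^ 2 * R ^ 2 < 9 / 16 := by nlinarith [mul_pos hx0 hR]
  have hratio : x ^ 2 * R ^ 2 / (1 - x ^ 2 * R ^ 2) ≤ 9 / 7 := by
    rw [div_le_iff₀ (by linarith)]
    linarith
  have hratio0 : 0 ≤ x ^ 2 * R ^ 2 / (1 - x ^ 2 * R ^ 2) := div_nonneg (by positivity) (by linarith)
  exact ⟨mul_nonneg hc hratio0, by nlinarith⟩

theorem eagv_stepsize_convergence (R : ℝ) (hR : 0 < R) (α : ℕ → ℝ)
    (hα0 : α 0 ∈ Set.Ioo 0 (3 / (4 * R)))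
    (hrec : ∀ k : ℕ, α (k + 1) =
      α k * (1 - (1 / (((k : ℝ) + 1) * ((k : ℝ) + 3))) *
        ((α k) ^ 2 * R ^ 2 / (1 - (α k) ^ 2 * R ^ 2)))) :
    (∀ k, α k ∈ Set.Ioo 0 (3 / (4 * R))) ∧ Antitone α ∧
      ∃ αinf : ℝ, 0 < αinf ∧ Tendsto α atTop (nhds αinf) := by
  set c : ℕ → ℝ := fun k => 1 / (((k : ℝ) + 1) * ((k : ℝ) + 3))
  set t : ℕ → ℝ := fun k => c k * ((α k) ^ 2 * R ^ 2 / (1 - (α k) ^ 2 * R ^ 2))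
  have hc0 (k : ℕ) : 0 ≤ c k := by positivity
  have hmem : ∀ k, α k ∈ Set.Ioo 0 (3 / (4 * R)) := by
    intro k
    induction k with
    | zero => exact hα0
    | succ k ih =>
      obtain ⟨ht0, ht⟩ := eagv_decrement_mem_Icc hR ih.1 ih.2 (hc0 k)
      have := one_div_add_one_mul_add_three_le k
      rw [hrec k]
      constructor <;> nlinarith [ih.1, ih.2]
  have ht (k : ℕ) : t k ∈ Set.Icc 0 (9 / 7 * c k) :=
    eagv_decrement_mem_Icc hR (hmem k).1 (hmem k).2 (hc0 k)
  have hsum : Summable t :=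
    (summable_one_div_add_one_mul_add_three.mul_left (9 / 7)).of_nonneg_of_le
      (fun k => (ht k).1) fun k => (ht k).2
  exact ⟨hmem, antitone_and_tendsto_pos_of_mul_one_sub hrec hα0.1 (fun k => (ht k).1)
    (fun k => by linarith [(ht k).2, one_div_add_one_mul_add_three_le k]) hsum⟩
end

section
/- Let G : ℝ^d → ℝ^d be ρ-comonotone with ρ > -1/(2R), R-Lipschitz, G(z*) = 0, and suppose the FEG-with-moving-anchor Lyapunov sequence V_k = A_k‖G(z^k)‖² - B_k⟨G(z^k), z̄^k - z^k⟩ + c_k‖z* - z̄^k‖² with A_k = (k²/2)(1/R + 2ρ) - kρ, B_k = k, c_k ↓ c_∞ ≥ 1/(1/R + 2ρ), z̄^0 = z^0, is nonincreasing with V_0 = c_0‖z^0 - z*‖². Then ‖G(z^k)‖² ≤ 4c_0‖z^0 - z*‖²/(k²(1/R + 2ρ)) for all k ≥ 1. -/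
/-!
Comonotonicity at the zero `z*` gives `ρ‖G zₖ‖² ≤ ⟪G zₖ, zₖ - z*⟫`, which cancels the `-kρ‖G zₖ‖²`
term of `Vₖ` and leaves `(k²/2)s‖G zₖ‖² - k⟪G zₖ, z̄ₖ - z*⟫ + cₖ‖z̄ₖ - z*‖²`, where
`s = 1/R + 2ρ > 0`. Since `cₖ ≥ c_∞ ≥ 1/s`, Young's inequality
`k‖G zₖ‖‖z̄ₖ - z*‖ ≤ (k²/4)s‖G zₖ‖² + ‖z̄ₖ - z*‖²/s` bounds this below by `(k²/4)s‖G zₖ‖²`,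
and `Vₖ ≤ V₀ = c₀‖z₀ - z*‖²` gives the rate.
-/

open Filter RealInnerProductSpace

lemma mul_le_div_four_mul_sq_add_sq_div {s : ℝ} (hs : 0 < s) (a b : ℝ) :
    a * b ≤ s / 4 * a ^ 2 + b ^ 2 / s := by
  have hsq : 0 ≤ (s * a - 2 * b) ^ 2 / (4 * s) := by positivity
  have expand : (s * a - 2 * b) ^ 2 / (4 * s) = s / 4 * a ^ 2 + b ^ 2 / s - a * b := by
    field_simp
    ring
  linarith

lemma one_div_add_two_mul_pos {R ρ : ℝ} (hR : 0 < R) (hρ : -1 / (2 * R) < ρ) :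
    0 < 1 / R + 2 * ρ := by
  have half : 2 * (-1 / (2 * R)) = -(1 / R) := by field_simp
  linarith

section Lyapunov

variable {E : Type*} [NormedAddCommGroup E] [InnerProductSpace ℝ E]

lemma lyapunov_lower_bound {g z zb zs : E} {k s ρ c : ℝ}
    (hmono : ρ * ‖g‖ ^ 2 ≤ ⟪g, z - zs⟫) (hk : 0 ≤ k) (hs : 0 < s) (hc : 1 / s ≤ c) :
    k ^ 2 / 4 * s * ‖g‖ ^ 2 ≤
      (k ^ 2 / 2 * s - k * ρ) * ‖g‖ ^ 2 - k * ⟪g, zb - z⟫ + c * ‖zs - zb‖ ^ 2 := by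
  have hsplit : ⟪g, zb - z⟫ = ⟪g, zb - zs⟫ - ⟪g, z - zs⟫ := by
    rw [← inner_sub_right, sub_sub_sub_cancel_right]
  have hcs : ⟪g, zb - zs⟫ ≤ ‖g‖ * ‖zs - zb‖ := by
    rw [norm_sub_rev]
    exact real_inner_le_norm g (zb - zs)
  have hyoung := mul_le_div_four_mul_sq_add_sq_div hs (k * ‖g‖) ‖zs - zb‖
  have hanchor : ‖zs - zb‖ ^ 2 / s ≤ c * ‖zs - zb‖ ^ 2 := by
    rw [← one_div_mul_eq_div]
    exact mul_le_mul_of_nonneg_right hc (sq_nonneg _)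
  have hk_mono := mul_le_mul_of_nonneg_left hmono hk
  have hk_cs := mul_le_mul_of_nonneg_left hcs hk
  rw [hsplit]
  linarith

end Lyapunov

theorem feg_moving_anchor_rate_general {d : ℕ}
    (G : EuclideanSpace ℝ (Fin d) → EuclideanSpace ℝ (Fin d))
    (R ρ : ℝ) (hR : 0 < R) (hρ : -1 / (2 * R) < ρ)
    (hcomono : ∀ z w, ρ * ‖G z - G w‖ ^ 2 ≤ ⟪G z - G w, z - w⟫)
    (zs : EuclideanSpace ℝ (Fin d)) (hzs : G zs = 0)
    (z zb : ℕ → EuclideanSpace ℝ (Fin d))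
    (c : ℕ → ℝ) (cinf : ℝ)
    (hcanti : Antitone c) (hclim : Tendsto c atTop (nhds cinf))
    (hcinf : 1 / (1 / R + 2 * ρ) ≤ cinf)
    (V : ℕ → ℝ)
    (hV : ∀ k : ℕ, V k =
      ((k : ℝ) ^ 2 / 2 * (1 / R + 2 * ρ) - (k : ℝ) * ρ) * ‖G (z k)‖ ^ 2
        - (k : ℝ) * ⟪G (z k), zb k - z k⟫
        + c k * ‖zs - zb k‖ ^ 2)
    (hVanti : Antitone V)
    (hV0 : V 0 = c 0 * ‖z 0 - zs‖ ^ 2) :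
    ∀ k : ℕ, 1 ≤ k →
      ‖G (z k)‖ ^ 2 ≤ 4 * c 0 * ‖z 0 - zs‖ ^ 2 / ((k : ℝ) ^ 2 * (1 / R + 2 * ρ)) := by
  intro k hk
  have hs := one_div_add_two_mul_pos hR hρ
  have hkpos : (0 : ℝ) < k := by exact_mod_cast hk
  have hmono : ρ * ‖G (z k)‖ ^ 2 ≤ ⟪G (z k), z k - zs⟫ := by
    simpa only [hzs, sub_zero] using hcomono (z k) zs
  have hck : 1 / (1 / R + 2 * ρ) ≤ c k := hcinf.trans (hcanti.le_of_tendsto hclim k)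
  have hlower : (k : ℝ) ^ 2 / 4 * (1 / R + 2 * ρ) * ‖G (z k)‖ ^ 2 ≤ c 0 * ‖z 0 - zs‖ ^ 2 := by
    calc _ ≤ V k := (hV k).symm ▸ lyapunov_lower_bound hmono hkpos.le hs hck
      _ ≤ V 0 := hVanti (Nat.zero_le k)
      _ = _ := hV0
  rw [le_div_iff₀ (by positivity)]
  linarith

theorem feg_moving_anchor_rate {d : ℕ}
    (G : EuclideanSpace ℝ (Fin d) → EuclideanSpace ℝ (Fin d))
    (R ρ : ℝ) (hR : 0 < R) (hρ : -1 / (2 * R) < ρ)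
    (hcomono : ∀ z w, ρ * ‖G z - G w‖ ^ 2 ≤ ⟪G z - G w, z - w⟫)
    (hlip : ∀ z w, ‖G z - G w‖ ≤ R * ‖z - w‖)
    (zs : EuclideanSpace ℝ (Fin d)) (hzs : G zs = 0)
    (z zb : ℕ → EuclideanSpace ℝ (Fin d)) (hz0 : zb 0 = z 0)
    (c : ℕ → ℝ) (cinf : ℝ)
    (hcanti : Antitone c) (hclim : Tendsto c atTop (nhds cinf))
    (hcinf : 1 / (1 / R + 2 * ρ) ≤ cinf)
    (V : ℕ → ℝ)
    (hV : ∀ k : ℕ, V k =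
      ((k : ℝ) ^ 2 / 2 * (1 / R + 2 * ρ) - (k : ℝ) * ρ) * ‖G (z k)‖ ^ 2
        - (k : ℝ) * ⟪G (z k), zb k - z k⟫
        + c k * ‖zs - zb k‖ ^ 2)
    (hVanti : Antitone V)
    (hV0 : V 0 = c 0 * ‖z 0 - zs‖ ^ 2) :
    ∀ k : ℕ, 1 ≤ k →
      ‖G (z k)‖ ^ 2 ≤ 4 * c 0 * ‖z 0 - zs‖ ^ 2 / ((k : ℝ) ^ 2 * (1 / R + 2 * ρ)) :=
  feg_moving_anchor_rate_general G R ρ hR hρ hcomono zs hzs z zb c cinf hcanti hclim hcinf V hV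
    hVanti hV0
end
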